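/- arXiv:2603.03167 — 2 statements merged into one kernel-verified Lean document; each statement's English description precedes it below -/
import Mathlib

section
/- Let P be a binary partial group and let BP_n ⊆ P^n be the set of length-n words w such that every full parenthesization of w gives a defined iterated product in P and all these products have the same value. If w = (a_1, ..., a_n) ∈ BP_n, then w† := (a_n†, ..., a_1†) ∈ BP_n; moreover, if the common product of w is a, then the common product of w† is a†. -/
/-- A unital partial magma: a partially defined binary operation (encoded via
`Option`) with a two-sided unit. -/
structure UnitalPartialMagma (P : Type*) where
  mul : P → P → Option P
  one : P
  mul_one : ∀ a, mul a one = some a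
  one_mul : ∀ a, mul one a = some a

/-- A binary partial group: a unital partial magma where each element has an
inverse `inv a` with: `a*b` defined implies `(inv a)*(a*b)` defined and equal
to `b`, and `b*a` defined implies `(b*a)*(inv a)` defined and equal to `b`. -/
structure BinaryPartialGroup (P : Type*) extends UnitalPartialMagma P where
  inv : P → P
  inv_left : ∀ a b c, mul a b = some c → mul (inv a) c = some b
  inv_right : ∀ a b c, mul b a = some c → mul c (inv a) = some b

/-- Full parenthesizations of words, as binary trees. -/
inductive PTree : Type where
  | leaf : PTree
  | node : PTree → PTree → PTree

/-- The number of letters a parenthesization applies to. -/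
def PTree.size : PTree → Nat
  | .leaf => 1
  | .node l r => l.size + r.size

/-- The mirrored parenthesization. -/
def PTree.mirror : PTree → PTree
  | .leaf => .leaf
  | .node l r => .node r.mirror l.mirror

/-- The partial iterated multiplication of a word determined by a full
parenthesization. -/
def evalTree {P : Type*} (M : UnitalPartialMagma P) : PTree → List P → Option P
  | .leaf, [a] => some a
  | .leaf, _ => none
  | .node l r, w =>
      (evalTree M l (w.take l.size)).bind fun x =>
        (evalTree M r (w.drop l.size)).bind fun y => M.mul x y

/-- `IsProd M w a` says that every full parenthesization of the word `w` gives a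
defined iterated product, and all these products equal `a`; the empty word has
product the unit.  Thus `w ∈ BP_n` iff `∃ a, IsProd M w a`. -/
def IsProd {P : Type*} (M : UnitalPartialMagma P) (w : List P) (a : P) : Prop :=
  (w = [] → a = M.one) ∧ ∀ t : PTree, t.size = w.length → evalTree M t w = some a

/-!
Inverting a defined product `a * b = c` gives `b† * a† = c†`.  By induction on a
parenthesization `t`, whenever `t` evaluates `w` to `c`, the mirrored parenthesization
evaluates `w†` to `c†`.  Since mirroring is an involution on parenthesizations that
preserves their size, every parenthesization of `w†` is the mirror of one of `w`.
-/

namespace PTree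

@[simp]
lemma size_mirror (t : PTree) : t.mirror.size = t.size := by
  induction t with
  | leaf => rfl
  | node l r ihl ihr => simp only [mirror, size, ihl, ihr, Nat.add_comm]

@[simp]
lemma mirror_mirror (t : PTree) : t.mirror.mirror = t := by
  induction t with
  | leaf => rfl
  | node l r ihl ihr => simp only [mirror, ihl, ihr]

end PTree

namespace BinaryPartialGroup

variable {P : Type*} (G : BinaryPartialGroup P)

lemma mul_inv_rev {a b c : P} (h : G.mul a b = some c) :
    G.mul (G.inv b) (G.inv a) = some (G.inv c) :=
  G.inv_left b _ _ (G.inv_right c _ _ (G.inv_left a b c h))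

lemma inv_one : G.inv G.one = G.one := by
  have h := G.inv_left G.one G.one G.one (G.one_mul G.one)
  rwa [G.mul_one, Option.some_inj] at h

end BinaryPartialGroup

section evalTree

variable {P : Type*}

lemma evalTree_leaf_eq_some {M : UnitalPartialMagma P} {w : List P} {c : P} :
    evalTree M .leaf w = some c ↔ w = [c] := by
  match w with
  | [] => simp [evalTree]
  | [x] => simp [evalTree]
  | _ :: _ :: _ => simp [evalTree]

lemma evalTree_node_eq_some {M : UnitalPartialMagma P} {l r : PTree} {w : List P} {c : P} :
    evalTree M (.node l r) w = some c ↔ ∃ x y, evalTree M l (w.take l.size) = some x ∧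
      evalTree M r (w.drop l.size) = some y ∧ M.mul x y = some c := by
  simp only [evalTree, Option.bind_eq_some_iff]
  aesop

lemma size_eq_length_of_evalTree_eq_some {M : UnitalPartialMagma P} {t : PTree}
    {w : List P} {c : P} (h : evalTree M t w = some c) : t.size = w.length := by
  induction t generalizing w c with
  | leaf => simp [evalTree_leaf_eq_some.1 h, PTree.size]
  | node l r ihl ihr =>
    obtain ⟨x, y, hx, hy, -⟩ := evalTree_node_eq_some.1 h
    have hl := ihl hx
    have hr := ihr hy
    simp only [List.length_take, List.length_drop] at hl hr
    simp only [PTree.size]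
    omega

lemma evalTree_mirror_reverse_map_inv (G : BinaryPartialGroup P) {t : PTree} {w : List P}
    {c : P} (h : evalTree G.toUnitalPartialMagma t w = some c) :
    evalTree G.toUnitalPartialMagma t.mirror (w.map G.inv).reverse = some (G.inv c) := by
  induction t generalizing w c with
  | leaf =>
    obtain rfl := evalTree_leaf_eq_some.1 h
    simp [PTree.mirror, evalTree]
  | node l r ihl ihr =>
    obtain ⟨x, y, hx, hy, hxy⟩ := evalTree_node_eq_some.1 h
    have hsplit : (w.map G.inv).reverse
        = ((w.drop l.size).map G.inv).reverse ++ ((w.take l.size).map G.inv).reverse := by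
      rw [← List.reverse_append, ← List.map_append, List.take_append_drop]
    have hlen : ((w.drop l.size).map G.inv).reverse.length = r.mirror.size := by
      simpa using (size_eq_length_of_evalTree_eq_some hy).symm
    refine evalTree_node_eq_some.2 ⟨G.inv y, G.inv x, ?_, ?_, G.mul_inv_rev hxy⟩
    · rw [hsplit, List.take_left' hlen]
      exact ihr hy
    · rw [hsplit, List.drop_left' hlen]
      exact ihl hx

end evalTree

/-- If `w ∈ BP_n` with common product `a`, then the reversed-and-inverted word
`w†` is in `BP_n`, with common product `a†`. -/
theorem stmt_12 {P : Type*} (G : BinaryPartialGroup P) (w : List P) (a : P)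
    (h : IsProd G.toUnitalPartialMagma w a) :
    IsProd G.toUnitalPartialMagma ((w.map G.inv).reverse) (G.inv a) := by
  obtain ⟨hnil, heval⟩ := h
  refine ⟨fun hw => ?_, fun t ht => ?_⟩
  · rw [hnil (by simpa using hw)]
    exact G.inv_one
  · have hmirror := heval t.mirror (by simpa using ht)
    simpa using evalTree_mirror_reverse_map_inv G hmirror
end

section
/- Let P be a binary partial group and BP_n ⊆ P^n the set of words all of whose fully parenthesized products are defined and equal. Then BP_n is closed under inner contractions: if (a_1, ..., a_n) ∈ BP_n and 1 ≤ i < n, then (a_1, ..., a_i·a_{i+1}, ..., a_n) ∈ BP_{n-1} with the same common product. -/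
/-!
Contracting the adjacent letters `x, y` of a word corresponds to splitting the matching leaf of a parenthesization `t` of the shorter word
into `node leaf leaf`: the resulting parenthesization of the longer word first multiplies `x`
and `y`, and then evaluates exactly as `t` does on the contracted word.  Applied to a single
parenthesization this shows that `x * y` is defined; applied to all of them it transfers the
common product.
-/

namespace PTree

/-- Split the `i`-th leaf (counting from `0`) into `node leaf leaf`. -/
def expand : PTree → ℕ → PTree
  | .leaf, _ => .node .leaf .leaf
  | .node l r, i => if i < l.size then .node (l.expand i) r else .node l (r.expand (i - l.size))

lemma one_le_size (t : PTree) : 1 ≤ t.size := by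
  induction t with
  | leaf => exact le_rfl
  | node l r _ _ => simp only [size]; omega

lemma size_expand (t : PTree) (i : ℕ) : (t.expand i).size = t.size + 1 := by
  induction t generalizing i with
  | leaf => rfl
  | node l r ihl ihr => simp only [expand]; split <;> simp only [size, ihl, ihr] <;> omega

lemma exists_size (n : ℕ) : ∃ t : PTree, t.size = n + 1 := by
  induction n with
  | zero => exact ⟨.leaf, rfl⟩
  | succ n ih =>
    obtain ⟨t, ht⟩ := ih
    exact ⟨.node t .leaf, by simp only [size, ht]⟩

end PTree

section

variable {P : Type*} (M : UnitalPartialMagma P)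

lemma evalTree_node_append (l r : PTree) {w₁ w₂ : List P} (h : w₁.length = l.size) :
    evalTree M (.node l r) (w₁ ++ w₂) =
      (evalTree M l w₁).bind fun p => (evalTree M r w₂).bind fun q => M.mul p q := by
  rw [evalTree, List.take_left' h, List.drop_left' h]

lemma evalTree_expand (t : PTree) (u v : List P) (x y : P)
    (h : u.length + 1 + v.length = t.size) :
    evalTree M (t.expand u.length) (u ++ x :: y :: v) =
      (M.mul x y).bind fun z => evalTree M t (u ++ z :: v) := by
  induction t generalizing u v with
  | leaf =>
    obtain ⟨rfl, rfl⟩ : u = [] ∧ v = [] := by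
      simp only [PTree.size] at h
      exact ⟨List.eq_nil_of_length_eq_zero (by omega), List.eq_nil_of_length_eq_zero (by omega)⟩
    simp [PTree.expand, evalTree, PTree.size]
  | node l r ihl ihr =>
    simp only [PTree.size] at h
    simp only [PTree.expand]
    split_ifs with hu
    · obtain ⟨v₁, v₂, rfl, hv₁⟩ : ∃ v₁ v₂, v = v₁ ++ v₂ ∧ v₁.length = l.size - u.length - 1 :=
        ⟨_, _, (List.take_append_drop (l.size - u.length - 1) v).symm,
          by have := r.one_le_size; simp only [List.length_take]; omega⟩
      have hl : u.length + 1 + v₁.length = l.size := by omega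
      rw [show u ++ x :: y :: (v₁ ++ v₂) = (u ++ x :: y :: v₁) ++ v₂ by simp,
        evalTree_node_append M _ _ (by simp [PTree.size_expand]; omega), ihl u v₁ hl,
        Option.bind_assoc]
      refine congrArg _ (funext fun z => ?_)
      rw [show u ++ z :: (v₁ ++ v₂) = (u ++ z :: v₁) ++ v₂ by simp,
        evalTree_node_append M _ _ (by simp; omega)]
    · obtain ⟨u₁, u₂, rfl, hu₁⟩ : ∃ u₁ u₂, u = u₁ ++ u₂ ∧ u₁.length = l.size :=
        ⟨_, _, (List.take_append_drop l.size u).symm, by simp only [List.length_take]; omega⟩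
      have hr : u₂.length + 1 + v.length = r.size := by simp only [List.length_append] at h; omega
      have hidx : (u₁ ++ u₂).length - l.size = u₂.length := by simp; omega
      simp only [hidx, List.append_assoc]
      rw [evalTree_node_append M _ _ hu₁, ihr u₂ v hr]
      cases M.mul x y <;> simp [evalTree_node_append M _ _ hu₁]

theorem IsProd.contract {u v : List P} {x y a : P} (h : IsProd M (u ++ x :: y :: v) a) :
    ∃ z, M.mul x y = some z ∧ IsProd M (u ++ z :: v) a := by
  have hlen (t : PTree) (ht : t.size = u.length + 1 + v.length) :
      (t.expand u.length).size = (u ++ x :: y :: v).length := by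
    simp only [PTree.size_expand, ht, List.length_append, List.length_cons]; omega
  have heval (t : PTree) (ht : t.size = u.length + 1 + v.length) :
      ((M.mul x y).bind fun z => evalTree M t (u ++ z :: v)) = some a := by
    rw [← evalTree_expand M t u v x y ht.symm]
    exact h.2 _ (hlen t ht)
  obtain ⟨t₀, ht₀⟩ := PTree.exists_size (u.length + v.length)
  obtain ⟨z, hz⟩ : ∃ z, M.mul x y = some z :=
    Option.isSome_iff_exists.mp (Option.isSome_of_isSome_bind (by rw [heval t₀ (by omega)]; rfl))
  refine ⟨z, hz, fun hnil => by simp at hnil, fun t ht => ?_⟩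
  simpa [hz] using heval t (by simp at ht; omega)

end

/-- `BP_n` is closed under inner contractions: multiplying two adjacent letters
(a product which is automatically defined) yields a word in `BP_{n-1}` with the
same common product. -/
theorem stmt_15 {P : Type*} (G : BinaryPartialGroup P) (u v : List P) (x y a : P)
    (h : IsProd G.toUnitalPartialMagma (u ++ x :: y :: v) a) :
    ∃ z, G.mul x y = some z ∧ IsProd G.toUnitalPartialMagma (u ++ z :: v) a :=
  h.contract
end
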